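/- arXiv:2503.10381 — 2 statements merged into one kernel-verified Lean document; each statement's English description precedes it below -/
import Mathlib

section
/- Let q_n denote continuants. For positive integers a_1,…,a_n and 1 ≤ k ≤ n, deleting the k-th entry satisfies (a_k+1)/2 ≤ q_n(a_1,…,a_n) / q_{n−1}(a_1,…,a_{k−1},a_{k+1},…,a_n) ≤ a_k+1. -/
noncomputable def gaussMap (x : ℝ) : ℝ := if x = 0 then 0 else 1/x - ⌊1/x⌋

noncomputable def cfA (n : ℕ) (x : ℝ) : ℕ := ⌊1 / (gaussMap^[n] x)⌋₊

def K : List ℕ → ℕ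
  | [] => 1
  | [a] => a
  | a :: b :: l => a * K (b :: l) + K l

def cylinder (l : List ℕ) : Set ℝ :=
  {x | x ∈ Set.Ico (0:ℝ) 1 ∧ ∀ i, i < l.length → cfA i x = l.getD i 0}

noncomputable def hContent (t : ℝ) (A : Set ℝ) : ENNReal :=
  ⨅ (c : ℕ → Set ℝ) (_ : A ⊆ ⋃ i, c i) (_ : ∀ i, ∃ x r, c i = Metric.ball x r),
    ∑' i, EMetric.diam (c i) ^ t

/-!
Let `A = K l₁`, `C = K l₂`, and let `B`, `D` be the continuants of `l₁` without its last entry and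
of `l₂` without its first entry. Splitting the continuant at the junction gives
`K (l₁ ++ l₂) = A C + B D` and `K (l₁ ++ a :: l₂) = a A C + A D + B C`. Since `B ≤ A` and `D ≤ C`,
the upper bound is `(A - B)(C - D) + a B D ≥ 0` and the lower bound is
`(a - 1)(A C - B D) + 2 D (A - B) + 2 B C ≥ 0`.
-/

/-- `K` of the list with its last entry dropped, except that `KInit [] = 0` (not `K [] = 1`);
this convention makes `K_append` hold with no side condition. -/
def KInit : List ℕ → ℕ
  | [] => 0
  | [_] => 1
  | a :: b :: l => a * KInit (b :: l) + KInit l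

/-- `K` of the tail of the list, except that `KTail [] = 0`. -/
def KTail : List ℕ → ℕ
  | [] => 0
  | _ :: l => K l

@[simp]
lemma KTail_cons (a : ℕ) (l : List ℕ) : KTail (a :: l) = K l := rfl

lemma K_cons (a : ℕ) (l : List ℕ) : K (a :: l) = a * K l + KTail l := by
  cases l <;> simp [K, KTail]

lemma K_append (u v : List ℕ) : K (u ++ v) = K u * K v + KInit u * KTail v := by
  induction u using K.induct with
  | case1 => simp [K, KInit]
  | case2 a => simp [K, KInit, K_cons]
  | case3 a b w ih₁ ih₂ =>
    change a * K ((b :: w) ++ v) + K (w ++ v) = _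
    rw [ih₁, ih₂]
    simp only [K, KInit]
    ring

lemma K_pos {l : List ℕ} (h : ∀ b ∈ l, 0 < b) : 0 < K l := by
  induction l using K.induct with
  | case1 => simp [K]
  | case2 a => simpa [K] using h
  | case3 a b w ih₁ _ =>
    have ha : 0 < a := h a (by simp)
    have := ih₁ fun x hx => h x (by simp [hx])
    simp only [K]
    positivity

lemma KInit_le_K {l : List ℕ} (h : ∀ b ∈ l, 0 < b) : KInit l ≤ K l := by
  induction l using K.induct with
  | case1 => simp [K, KInit]
  | case2 a => simpa [K, KInit, Nat.one_le_iff_ne_zero, Nat.pos_iff_ne_zero] using h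
  | case3 a b w ih₁ ih₂ =>
    simp only [K, KInit]
    gcongr
    · exact ih₁ fun x hx => h x (by simp [hx])
    · exact ih₂ fun x hx => h x (by simp [hx])

lemma KTail_le_K {l : List ℕ} (h : ∀ b ∈ l, 0 < b) : KTail l ≤ K l := by
  cases l with
  | nil => simp [K, KTail]
  | cons a l =>
    have ha : 1 ≤ a := h a (by simp)
    rw [K_cons, KTail_cons]
    nlinarith

lemma K_append_cons (l₁ l₂ : List ℕ) (a : ℕ) :
    K (l₁ ++ a :: l₂) = K l₁ * (a * K l₂ + KTail l₂) + KInit l₁ * K l₂ := by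
  rw [K_append, K_cons, KTail_cons]

lemma K_append_cons_le {l₁ l₂ : List ℕ} (h₁ : ∀ b ∈ l₁, 0 < b) (h₂ : ∀ b ∈ l₂, 0 < b) (a : ℕ) :
    K (l₁ ++ a :: l₂) ≤ (a + 1) * K (l₁ ++ l₂) := by
  obtain ⟨x, hx⟩ := Nat.exists_eq_add_of_le (KInit_le_K h₁)
  obtain ⟨y, hy⟩ := Nat.exists_eq_add_of_le (KTail_le_K h₂)
  calc K (l₁ ++ a :: l₂) ≤ K (l₁ ++ a :: l₂) + (x * y + a * KInit l₁ * KTail l₂) :=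
        Nat.le_add_right _ _
    _ = (a + 1) * K (l₁ ++ l₂) := by rw [K_append_cons, K_append, hx, hy]; ring

lemma K_append_le_K_append_cons {l₁ l₂ : List ℕ} (h₁ : ∀ b ∈ l₁, 0 < b)
    (h₂ : ∀ b ∈ l₂, 0 < b) {a : ℕ} (ha : 0 < a) :
    (a + 1) * K (l₁ ++ l₂) ≤ 2 * K (l₁ ++ a :: l₂) := by
  obtain ⟨x, hx⟩ := Nat.exists_eq_add_of_le (KInit_le_K h₁)
  obtain ⟨y, hy⟩ := Nat.exists_eq_add_of_le (KTail_le_K h₂)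
  obtain ⟨c, rfl⟩ := Nat.exists_eq_add_of_le ha
  set B := KInit l₁
  set D := KTail l₂
  calc (1 + c + 1) * K (l₁ ++ l₂)
      ≤ (1 + c + 1) * K (l₁ ++ l₂) + (c * (B * y + x * D + x * y) + 2 * D * x + 2 * B * (D + y)) :=
        Nat.le_add_right _ _
    _ = 2 * K (l₁ ++ (1 + c) :: l₂) := by rw [K_append_cons, K_append, hx, hy]; ring

theorem continuant_delete_entry (l₁ l₂ : List ℕ) (a : ℕ) (ha : 0 < a)
    (h₁ : ∀ b ∈ l₁, 0 < b) (h₂ : ∀ b ∈ l₂, 0 < b) :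
    ((a:ℝ) + 1) / 2 ≤ (K (l₁ ++ a :: l₂) : ℝ) / (K (l₁ ++ l₂) : ℝ) ∧
    (K (l₁ ++ a :: l₂) : ℝ) / (K (l₁ ++ l₂) : ℝ) ≤ (a:ℝ) + 1 := by
  have hpos : (0 : ℝ) < K (l₁ ++ l₂) := by
    exact_mod_cast K_pos fun b hb => (List.mem_append.1 hb).elim (h₁ b) (h₂ b)
  constructor
  · rw [div_le_div_iff₀ two_pos hpos, mul_comm _ (2 : ℝ)]
    exact_mod_cast K_append_le_K_append_cons h₁ h₂ ha
  · rw [div_le_iff₀ hpos]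
    exact_mod_cast K_append_cons_le h₁ h₂ a
end

section
/- Let b, b' be distinct even integers in [B^{nt}, 2B^{nt}] with B > 1, t > 0, and let (a_1,…,a_n) be any n-tuple of positive integers. Then there is an integer b'' strictly between b and b', and the cylinder I_{n+1}(a_1,…,a_n,b'') has length at least (1/32)·|I_{n+1}(a_1,…,a_n,b)|; consequently, the distance between the cylinders I_{n+1}(a_1,…,a_n,b) and I_{n+1}(a_1,…,a_n,b') is at least |I_{n+1}(a_1,…,a_n,b)|/32. -/
/-!
The cylinder of `l ++ [c]` is the image of `[0, 1)` under the Möbius map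
`y ↦ [0; a₁, …, aₙ, c + y] = (p + p' y) / (q + q' y)` with `|p' q - p q'| = 1` and
`q = q_{n+1} ≥ q' = q_n`, so its length lies between `1 / (8 q²)` and `1 / q²`.
As `b ≠ b'` are even, `v = min b b' + 1` lies strictly between them; the map
`y ↦ [0; a₁, …, aₙ + y]` is monotone, so the cylinder of `v` sits between those of `b` and `b'`,
and both its length and the gap are at least `1 / (8 q_{n+1}(v)²)`. Finally
`b, b' ∈ [B^{nt}, 2B^{nt}]` gives `q_{n+1}(v) ≤ (v + 1) q_n ≤ 2 b q_n ≤ 2 q_{n+1}(b)`,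
whence the constant `32`.
-/

/-- The previous continuant `q_{n-1}` of `l = [a₁, …, aₙ]`, with the convention `q_{-1} = 0`
(so `Kprev [] = 0`, whereas `K [] = 1`). -/
def Kprev (l : List ℕ) : ℕ := if l = [] then 0 else K l.dropLast

/-- `cfEval [a₁, …, aₙ] y = [0; a₁, …, aₙ + y]`, the inverse branch of `gaussMap^[n]` on the
cylinder of `[a₁, …, aₙ]`. -/
noncomputable def cfEval : List ℕ → ℝ → ℝ
  | [], y => y
  | a :: l, y => 1 / (a + cfEval l y)

theorem K_pos_s19 : ∀ l : List ℕ, (∀ a ∈ l, 0 < a) → 0 < K l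
  | [], _ => by simp [K]
  | [a], h => by simpa [K] using h a (by simp)
  | a :: b :: m, h => by
      have hb : 0 < K (b :: m) := K_pos_s19 (b :: m) fun x hx => h x (by simp [hx])
      have : 0 < a * K (b :: m) := Nat.mul_pos (h a (by simp)) hb
      simp only [K]
      omega

lemma Kprev_cons_cons (a b : ℕ) (m : List ℕ) :
    Kprev (a :: b :: m) = a * Kprev (b :: m) + Kprev m := by
  cases m <;> simp [Kprev, K, List.dropLast]

theorem K_append_s19 : ∀ (l : List ℕ) (c : ℕ), K (l ++ [c]) = c * K l + Kprev l
  | [], c => by simp [K, Kprev]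
  | [a], c => by simp [K, Kprev]; ring
  | a :: b :: m, c => by
      have h₁ := K_append_s19 (b :: m) c
      have h₂ := K_append_s19 m c
      simp only [List.cons_append, K] at *
      rw [h₁, h₂, Kprev_cons_cons]
      ring

lemma Kprev_le_K (l : List ℕ) (hl : ∀ a ∈ l, 0 < a) : Kprev l ≤ K l := by
  rcases List.eq_nil_or_concat l with rfl | ⟨m, c, rfl⟩
  · simp [Kprev, K]
  · have hc : 0 < c := hl c (by simp)
    rw [List.concat_eq_append, K_append_s19, Kprev, if_neg (by simp), List.dropLast_concat]
    nlinarith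

lemma mul_K_le_K_append (l : List ℕ) (c : ℕ) : c * K l ≤ K (l ++ [c]) := by
  rw [K_append_s19]
  exact Nat.le_add_right _ _

lemma K_append_le (l : List ℕ) (hl : ∀ a ∈ l, 0 < a) (c : ℕ) :
    K (l ++ [c]) ≤ (c + 1) * K l := by
  rw [K_append_s19, add_one_mul]
  exact Nat.add_le_add_left (Kprev_le_K l hl) _

/-- Here `p, p'` are the numerators `pₙ, pₙ₋₁`; their recursions are carried along so that the
induction goes through. -/
theorem cfEval_eq_div : ∀ l : List ℕ, (∀ a ∈ l, 0 < a) →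
    ∃ p p' : ℕ, (∀ a, K (a :: l) = a * K l + p) ∧ (∀ a, Kprev (a :: l) = a * Kprev l + p') ∧
      |(p' * K l - p * Kprev l : ℤ)| = 1 ∧
      ∀ y : ℝ, 0 ≤ y → cfEval l y = (p + p' * y) / (K l + Kprev l * y)
  | [], _ => ⟨0, 1, fun a => by simp [K], fun a => by simp [Kprev, K], by simp [K, Kprev],
      fun y _ => by simp [cfEval, K, Kprev]⟩
  | a :: l, h => by
      have hl : ∀ x ∈ l, 0 < x := fun x hx => h x (by simp [hx])
      obtain ⟨p, p', hK, hKprev, hdet, hform⟩ := cfEval_eq_div l hl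
      refine ⟨K l, Kprev l, fun b => ?_, fun b => Kprev_cons_cons b a l, ?_, fun y hy => ?_⟩
      · cases l <;> simp [K]
      · rw [hK, hKprev, ← hdet, ← abs_neg]
        push_cast
        ring_nf
      · have hKl : (1 : ℝ) ≤ K l := by exact_mod_cast K_pos_s19 l hl
        have hnum : (K (a :: l) : ℝ) + Kprev (a :: l) * y
            = a * (K l + Kprev l * y) + (p + p' * y) := by
          rw [hK, hKprev]; push_cast; ring
        rw [cfEval, hform y hy, hnum]
        field_simp

lemma cfEval_sub (l : List ℕ) (hl : ∀ a ∈ l, 0 < a) :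
    ∃ ε : ℝ, |ε| = 1 ∧ ∀ y y' : ℝ, 0 ≤ y → 0 ≤ y' →
      cfEval l y - cfEval l y' = ε * (y - y') / ((K l + Kprev l * y) * (K l + Kprev l * y')) := by
  obtain ⟨p, p', -, -, hdet, hform⟩ := cfEval_eq_div l hl
  have hKl : (1 : ℝ) ≤ K l := by exact_mod_cast K_pos_s19 l hl
  refine ⟨p' * K l - p * Kprev l, by exact_mod_cast hdet, fun y y' hy hy' => ?_⟩
  rw [hform y hy, hform y' hy', div_sub_div _ _ (by positivity) (by positivity),
    div_eq_div_iff (by positivity) (by positivity)]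
  ring

lemma abs_cfEval_sub (l : List ℕ) (hl : ∀ a ∈ l, 0 < a) {y y' : ℝ} (hy : 0 ≤ y) (hy' : 0 ≤ y') :
    |cfEval l y - cfEval l y'| = |y - y'| / ((K l + Kprev l * y) * (K l + Kprev l * y')) := by
  obtain ⟨ε, hε, hsub⟩ := cfEval_sub l hl
  have hKl : (1 : ℝ) ≤ K l := by exact_mod_cast K_pos_s19 l hl
  have hD : (0 : ℝ) < (K l + Kprev l * y) * (K l + Kprev l * y') := by positivity
  rw [hsub y y' hy hy', abs_div, abs_mul, hε, one_mul, abs_of_pos hD]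

lemma abs_cfEval_sub_le (l : List ℕ) (hl : ∀ a ∈ l, 0 < a) {y y' : ℝ} (hy : 0 ≤ y)
    (hy' : 0 ≤ y') : |cfEval l y - cfEval l y'| ≤ |y - y'| / K l ^ 2 := by
  have hKl : (1 : ℝ) ≤ K l := by exact_mod_cast K_pos_s19 l hl
  rw [abs_cfEval_sub l hl hy hy']
  gcongr
  · rw [sq]
    gcongr <;> exact le_add_of_nonneg_right (by positivity)

lemma abs_sub_div_le_abs_cfEval_sub (l : List ℕ) (hl : ∀ a ∈ l, 0 < a) {y y' : ℝ}
    (hy : y ∈ Set.Icc (0 : ℝ) 1) (hy' : y' ∈ Set.Icc (0 : ℝ) 1) :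
    |y - y'| / (4 * K l ^ 2) ≤ |cfEval l y - cfEval l y'| := by
  have hKl : (1 : ℝ) ≤ K l := by exact_mod_cast K_pos_s19 l hl
  have hKprev : (Kprev l : ℝ) ≤ K l := by exact_mod_cast Kprev_le_K l hl
  have hD : ∀ z ∈ Set.Icc (0 : ℝ) 1, (K l : ℝ) + Kprev l * z ≤ 2 * K l := fun z hz => by
    nlinarith [hz.1, hz.2]
  have hy₀ := hy.1
  have hy₀' := hy'.1
  rw [abs_cfEval_sub l hl hy₀ hy₀']
  refine div_le_div_of_nonneg_left (abs_nonneg _) (by positivity) ?_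
  calc ((K l : ℝ) + Kprev l * y) * (K l + Kprev l * y') ≤ (2 * K l) * (2 * K l) :=
        mul_le_mul (hD y hy) (hD y' hy') (by positivity) (by positivity)
    _ = 4 * K l ^ 2 := by ring

lemma cfEval_monotoneOn_or_antitoneOn (l : List ℕ) (hl : ∀ a ∈ l, 0 < a) :
    MonotoneOn (cfEval l) (Set.Ici 0) ∨ AntitoneOn (cfEval l) (Set.Ici 0) := by
  obtain ⟨ε, hε, hsub⟩ := cfEval_sub l hl
  have hKl : (1 : ℝ) ≤ K l := by exact_mod_cast K_pos_s19 l hl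
  have hsign : ∀ y y' : ℝ, 0 ≤ y → 0 ≤ y' → y ≤ y' →
      ε * (cfEval l y - cfEval l y') ≤ 0 := fun y y' hy hy' hyy' => by
    rw [hsub y y' hy hy', mul_div_assoc', ← mul_assoc, ← sq, ← sq_abs, hε, one_pow, one_mul]
    exact div_nonpos_of_nonpos_of_nonneg (sub_nonpos.mpr hyy') (by positivity)
  rcases (abs_eq zero_le_one).mp hε with rfl | rfl
  · exact Or.inl fun y hy y' hy' hyy' => by linarith [hsign y y' hy hy' hyy']
  · exact Or.inr fun y hy y' hy' hyy' => by linarith [hsign y y' hy hy' hyy']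

lemma abs_sub_le_abs_sub_of_monotoneOn_or_antitoneOn {α : Type*} [Preorder α] {f : α → ℝ}
    {s : Set α} (hf : MonotoneOn f s ∨ AntitoneOn f s) {a b c d : α} (ha : a ∈ s) (hb : b ∈ s)
    (hc : c ∈ s) (hd : d ∈ s) (hab : a ≤ b) (hbc : b ≤ c) (hcd : c ≤ d) :
    |f c - f b| ≤ |f d - f a| := by
  rcases hf with hf | hf
  · have := hf ha hb hab; have := hf hb hc hbc; have := hf hc hd hcd
    exact (abs_le.mpr ⟨by linarith, by linarith⟩).trans (le_abs_self _)
  · have := hf ha hb hab; have := hf hb hc hbc; have := hf hc hd hcd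
    exact (abs_le.mpr ⟨by linarith, by linarith⟩).trans (neg_le_abs _)

lemma cfEval_append : ∀ (l₁ l₂ : List ℕ) (y : ℝ),
    cfEval (l₁ ++ l₂) y = cfEval l₁ (cfEval l₂ y)
  | [], _, _ => rfl
  | a :: m, l₂, y => by rw [List.cons_append, cfEval, cfEval, cfEval_append m l₂ y]

lemma cfEval_append_singleton (l : List ℕ) (c : ℕ) (y : ℝ) :
    cfEval (l ++ [c]) y = cfEval l (1 / (c + y)) := by
  rw [cfEval_append, cfEval, cfEval]

lemma gaussMap_eq_fract (x : ℝ) : gaussMap x = Int.fract (1 / x) := by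
  unfold gaussMap
  split_ifs with hx
  · simp [hx]
  · exact Int.self_sub_floor _

lemma gaussMap_mem_Ico (x : ℝ) : gaussMap x ∈ Set.Ico (0 : ℝ) 1 := by
  rw [gaussMap_eq_fract]
  exact ⟨Int.fract_nonneg _, Int.fract_lt_one _⟩

lemma one_div_eq_cfA_zero_add_gaussMap {x : ℝ} (hx : 0 ≤ x) : 1 / x = cfA 0 x + gaussMap x := by
  rw [gaussMap_eq_fract, cfA, Function.iterate_zero_apply,
    natCast_floor_eq_intCast_floor (by positivity), Int.floor_add_fract]

lemma cfA_succ (i : ℕ) (x : ℝ) : cfA (i + 1) x = cfA i (gaussMap x) := by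
  rw [cfA, cfA, Function.iterate_succ_apply]

lemma cfA_zero_one_div_add (a : ℕ) {z : ℝ} (hz : z ∈ Set.Ico (0 : ℝ) 1) :
    cfA 0 (1 / (a + z)) = a := by
  rw [cfA, Function.iterate_zero_apply, one_div_one_div, add_comm, Nat.floor_add_natCast hz.1,
    Nat.floor_eq_zero.mpr hz.2, zero_add]

lemma gaussMap_one_div_add (a : ℕ) {z : ℝ} (hz : z ∈ Set.Ico (0 : ℝ) 1) :
    gaussMap (1 / (a + z)) = z := by
  rw [gaussMap_eq_fract, one_div_one_div, add_comm, Int.fract_add_natCast, Int.fract_eq_self.mpr hz]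

lemma mem_cylinder_cons {a : ℕ} {l : List ℕ} {x : ℝ} :
    x ∈ cylinder (a :: l) ↔ x ∈ Set.Ico (0 : ℝ) 1 ∧ cfA 0 x = a ∧ gaussMap x ∈ cylinder l := by
  simp only [cylinder, Set.mem_ofPred_eq, List.length_cons, Nat.forall_lt_succ_left,
    List.getD_cons_zero, List.getD_cons_succ, cfA_succ, gaussMap_mem_Ico, true_and]

lemma isBounded_cylinder (l : List ℕ) : Bornology.IsBounded (cylinder l) :=
  Metric.isBounded_Ico (0 : ℝ) 1 |>.subset fun _ hx => hx.1

lemma cfEval_pos : ∀ (l : List ℕ) {y : ℝ}, 0 < y → 0 < cfEval l y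
  | [], _, hy => hy
  | a :: l, _, hy => by
      have := cfEval_pos l hy
      rw [cfEval]
      positivity

theorem cfEval_mem_cylinder : ∀ l : List ℕ, (∀ a ∈ l, 0 < a) →
    ∀ {y : ℝ}, y ∈ Set.Ioo (0 : ℝ) 1 → cfEval l y ∈ cylinder l
  | [], _, _, hy => ⟨Set.Ioo_subset_Ico_self hy, fun _ hi => absurd hi (Nat.not_lt_zero _)⟩
  | a :: l, h, y, hy => by
      have hz : cfEval l y ∈ cylinder l := cfEval_mem_cylinder l (fun x hx => h x (by simp [hx])) hy
      have hz₀ : 0 < cfEval l y := cfEval_pos l hy.1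
      have ha : (1 : ℝ) ≤ a := by exact_mod_cast h a (by simp)
      rw [cfEval, mem_cylinder_cons, cfA_zero_one_div_add a hz.1, gaussMap_one_div_add a hz.1]
      refine ⟨⟨by positivity, ?_⟩, rfl, hz⟩
      rw [div_lt_one (by positivity)]
      linarith

theorem cylinder_subset_image_cfEval : ∀ l : List ℕ, cylinder l ⊆ cfEval l '' Set.Ico (0 : ℝ) 1
  | [], x, hx => ⟨x, hx.1, rfl⟩
  | a :: l, x, hx => by
      obtain ⟨hxI, hxa, hgx⟩ := mem_cylinder_cons.mp hx
      obtain ⟨y, hy, hyx⟩ := cylinder_subset_image_cfEval l hgx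
      refine ⟨y, hy, ?_⟩
      rw [cfEval, hyx, ← hxa, ← one_div_eq_cfA_zero_add_gaussMap hxI.1, one_div_one_div]

lemma diam_cylinder_le (l : List ℕ) (hl : ∀ a ∈ l, 0 < a) :
    Metric.diam (cylinder l) ≤ 1 / (K l : ℝ) ^ 2 := by
  refine Metric.diam_le_of_forall_dist_le (by positivity) ?_
  intro x hx x' hx'
  obtain ⟨y, hy, rfl⟩ := cylinder_subset_image_cfEval l hx
  obtain ⟨y', hy', rfl⟩ := cylinder_subset_image_cfEval l hx'
  have hyy' : |y - y'| ≤ 1 := abs_sub_le_of_nonneg_of_le hy.1 hy.2.le hy'.1 hy'.2.le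
  calc dist (cfEval l y) (cfEval l y') ≤ |y - y'| / K l ^ 2 := abs_cfEval_sub_le l hl hy.1 hy'.1
    _ ≤ 1 / K l ^ 2 := by gcongr

lemma one_div_le_abs_cfEval_quarters (l : List ℕ) (hl : ∀ a ∈ l, 0 < a) :
    1 / (8 * (K l : ℝ) ^ 2) ≤ |cfEval l (1 / 4) - cfEval l (3 / 4)| := by
  refine le_of_eq_of_le ?_ (abs_sub_div_le_abs_cfEval_sub l hl (by norm_num) (by norm_num))
  rw [show |(1 / 4 : ℝ) - 3 / 4| = 1 / 2 by norm_num [abs_of_neg]]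
  ring

lemma one_div_le_diam_cylinder (l : List ℕ) (hl : ∀ a ∈ l, 0 < a) :
    1 / (8 * (K l : ℝ) ^ 2) ≤ Metric.diam (cylinder l) :=
  (one_div_le_abs_cfEval_quarters l hl).trans <| Metric.dist_le_diam_of_mem (isBounded_cylinder l)
    (cfEval_mem_cylinder l hl (by norm_num)) (cfEval_mem_cylinder l hl (by norm_num))

/-- By monotonicity of `cfEval l`, the points `cfEval (l ++ [v]) (1/4)` and
`cfEval (l ++ [v]) (3/4)` lie between `x` and `x'`. -/
lemma one_div_le_abs_sub_of_mem_cylinder_append (l : List ℕ) (hl : ∀ a ∈ l, 0 < a) {u v w : ℕ}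
    (hu : 0 < u) (huv : u < v) (hvw : v < w) {x x' : ℝ} (hx : x ∈ cylinder (l ++ [u]))
    (hx' : x' ∈ cylinder (l ++ [w])) : 1 / (8 * (K (l ++ [v]) : ℝ) ^ 2) ≤ |x - x'| := by
  obtain ⟨y, hy, rfl⟩ := cylinder_subset_image_cfEval _ hx
  obtain ⟨y', hy', rfl⟩ := cylinder_subset_image_cfEval _ hx'
  have hlv : ∀ a ∈ l ++ [v], 0 < a :=
    List.forall_mem_append.mpr ⟨hl, List.forall_mem_singleton.mpr (hu.trans huv)⟩
  have hu₁ : (1 : ℝ) ≤ u := by exact_mod_cast hu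
  have huv₁ : (u : ℝ) + 1 ≤ v := by exact_mod_cast huv
  have hvw₁ : (v : ℝ) + 1 ≤ w := by exact_mod_cast hvw
  have hy₀ := hy.1
  have hy₀' := hy'.1
  refine (one_div_le_abs_cfEval_quarters _ hlv).trans ?_
  simp only [cfEval_append_singleton]
  refine abs_sub_le_abs_sub_of_monotoneOn_or_antitoneOn (cfEval_monotoneOn_or_antitoneOn l hl)
    (Set.mem_Ici.mpr (by positivity)) (Set.mem_Ici.mpr (by positivity))
    (Set.mem_Ici.mpr (by positivity)) (Set.mem_Ici.mpr (by positivity)) ?_ ?_ ?_ <;>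
  refine one_div_le_one_div_of_le (by positivity) ?_ <;> linarith [hy.2]

lemma K_append_le_two_mul (l : List ℕ) (hl : ∀ a ∈ l, 0 < a) {b v : ℕ} (hv : v + 1 ≤ 2 * b) :
    K (l ++ [v]) ≤ 2 * K (l ++ [b]) :=
  calc K (l ++ [v]) ≤ (v + 1) * K l := K_append_le l hl v
    _ ≤ 2 * b * K l := Nat.mul_le_mul_right _ hv
    _ ≤ 2 * K (l ++ [b]) := by rw [mul_assoc]; exact Nat.mul_le_mul_left 2 (mul_K_le_K_append l b)

lemma diam_cylinder_append_div_le (l : List ℕ) (hl : ∀ a ∈ l, 0 < a) {b v : ℕ} (hb : 0 < b)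
    (hv₀ : 0 < v) (hv : v + 1 ≤ 2 * b) :
    Metric.diam (cylinder (l ++ [b])) / 32 ≤ 1 / (8 * (K (l ++ [v]) : ℝ) ^ 2) := by
  have hKv : (0 : ℝ) < K (l ++ [v]) :=
    mod_cast K_pos_s19 _ (List.forall_mem_append.mpr ⟨hl, List.forall_mem_singleton.mpr hv₀⟩)
  have hK : (K (l ++ [v]) : ℝ) ≤ 2 * K (l ++ [b]) := mod_cast K_append_le_two_mul l hl hv
  calc Metric.diam (cylinder (l ++ [b])) / 32 ≤ 1 / (K (l ++ [b]) : ℝ) ^ 2 / 32 := by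
        gcongr
        exact diam_cylinder_le _ (List.forall_mem_append.mpr ⟨hl, List.forall_mem_singleton.mpr hb⟩)
    _ ≤ 1 / (8 * (K (l ++ [v]) : ℝ) ^ 2) := by
        rw [div_div]
        exact one_div_le_one_div_of_le (by positivity) (by nlinarith)

theorem cylinder_separation_general (n : ℕ) (t B : ℝ) (hB : 1 < B)
    (l : List ℕ) (hl : ∀ a ∈ l, 0 < a)
    (b b' : ℕ) (hne : b ≠ b') (heb : Even b) (heb' : Even b')
    (hb1 : B ^ ((n:ℝ) * t) ≤ (b:ℝ)) (hb2 : (b:ℝ) ≤ 2 * B ^ ((n:ℝ) * t))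
    (hb1' : B ^ ((n:ℝ) * t) ≤ (b':ℝ)) (hb2' : (b':ℝ) ≤ 2 * B ^ ((n:ℝ) * t)) :
    ∃ b'' : ℕ, min b b' < b'' ∧ b'' < max b b' ∧
      Metric.diam (cylinder (l ++ [b])) / 32 ≤ Metric.diam (cylinder (l ++ [b''])) ∧
      ∀ x ∈ cylinder (l ++ [b]), ∀ y ∈ cylinder (l ++ [b']),
        Metric.diam (cylinder (l ++ [b])) / 32 ≤ |x - y| := by
  have hX : 0 < B ^ ((n:ℝ) * t) := by positivity
  have hb : 0 < b := by exact_mod_cast hX.trans_le hb1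
  have hb' : 0 < b' := by exact_mod_cast hX.trans_le hb1'
  have hgap : min b b' + 2 ≤ max b b' := by
    obtain ⟨r, rfl⟩ := heb
    obtain ⟨r', rfl⟩ := heb'
    omega
  have hmax : max b b' ≤ 2 * b :=
    max_le (by omega) (by exact_mod_cast (by linarith : (b' : ℝ) ≤ 2 * b))
  set v := min b b' + 1
  have hlv : ∀ a ∈ l ++ [v], 0 < a :=
    List.forall_mem_append.mpr ⟨hl, List.forall_mem_singleton.mpr (by omega)⟩
  have hsmall := diam_cylinder_append_div_le l hl hb (v := v) (by omega) (by omega)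
  refine ⟨v, by omega, by omega, hsmall.trans (one_div_le_diam_cylinder _ hlv),
    fun x hx y hy => hsmall.trans ?_⟩
  rcases hne.lt_or_gt with h | h
  · exact one_div_le_abs_sub_of_mem_cylinder_append l hl hb (by omega) (by omega) hx hy
  · rw [abs_sub_comm]
    exact one_div_le_abs_sub_of_mem_cylinder_append l hl hb' (by omega) (by omega) hy hx

theorem cylinder_separation (n : ℕ) (t B : ℝ) (ht : 0 < t) (hB : 1 < B)
    (l : List ℕ) (hlen : l.length = n) (hl : ∀ a ∈ l, 0 < a)
    (b b' : ℕ) (hne : b ≠ b') (heb : Even b) (heb' : Even b')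
    (hb1 : B ^ ((n:ℝ) * t) ≤ (b:ℝ)) (hb2 : (b:ℝ) ≤ 2 * B ^ ((n:ℝ) * t))
    (hb1' : B ^ ((n:ℝ) * t) ≤ (b':ℝ)) (hb2' : (b':ℝ) ≤ 2 * B ^ ((n:ℝ) * t)) :
    ∃ b'' : ℕ, min b b' < b'' ∧ b'' < max b b' ∧
      Metric.diam (cylinder (l ++ [b])) / 32 ≤ Metric.diam (cylinder (l ++ [b''])) ∧
      ∀ x ∈ cylinder (l ++ [b]), ∀ y ∈ cylinder (l ++ [b']),
        Metric.diam (cylinder (l ++ [b])) / 32 ≤ |x - y| :=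
  cylinder_separation_general n t B hB l hl b b' hne heb heb' hb1 hb2 hb1' hb2'
end
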